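/- Right adjoints preserve limits, in the following 2-categorical form. In a strict 2-category, suppose given: adjunctions f ⊣ u (with f : b ⟶ a, unit η, counit ε) and f' ⊣ u' (with f' : b' ⟶ a', unit η', counit ε'); 1-cells Δa : a ⟶ a' and Δb : b ⟶ b' satisfying the strict equalities f ≫ Δa = Δb ≫ f' and u ≫ Δb = Δa ≫ u'; and suppose the units and counits are compatible, i.e. the whiskered 2-cells η ▷ Δb and Δb ◁ η' agree (as 2-cells Δb ⟶ Δb ≫ f' ≫ u' = f ≫ u ≫ Δb, via these equalities), and likewise ε ▷ Δa and Δa ◁ ε' agree. Then for any object x and 1-cell d : x ⟶ a', if a 1-cell r : x ⟶ a and 2-cell λ : r ≫ Δa ⟶ d form an absolute right lifting of d through Δa, the 1-cell r ≫ u : x ⟶ b together with the 2-cell (r ≫ u) ≫ Δb = r ≫ Δa ≫ u' ⟶ d ≫ u' given by λ ▷ u' forms an absolute right lifting of d ≫ u' through Δb. -/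

import Mathlib

open CategoryTheory Bicategory

/-!
Transposing across `f' ⊣ u'`, rewriting along `p ≫ Δb ≫ f' = p ≫ f ≫ Δa`, and transposing back
across `f ⊣ u` identifies 2-cells `p ≫ Δb ⟶ q ≫ d ≫ u'` with 2-cells `p ≫ f ⟶ q ≫ r`.
Because the counits are compatible with `Δa`, this identification turns factorisations through
`lam ▷ u'` into factorisations through `lam`, so unique factorisation transfers from `(r, lam)`.
-/

/-- Given 1-cells `f : b ⟶ a` and `g : c ⟶ a` in a (strict) bicategory, a 1-cell
`ℓ : c ⟶ b` together with a 2-cell `lam : ℓ ≫ f ⟶ g` is an *absolute right lifting*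
of `g` through `f` if every 2-cell `χ : p ≫ f ⟶ q ≫ g` factors uniquely through
`lam`. -/
def IsAbsoluteRightLifting {B : Type*} [Bicategory B] {a b c : B}
    (f : b ⟶ a) (g : c ⟶ a) (ℓ : c ⟶ b) (lam : ℓ ≫ f ⟶ g) : Prop :=
  ∀ (x : B) (p : x ⟶ b) (q : x ⟶ c) (χ : p ≫ f ⟶ q ≫ g),
    ∃! ζ : p ⟶ q ≫ ℓ, χ = ζ ▷ f ≫ (α_ q ℓ f).hom ≫ q ◁ lam

theorem isAbsoluteRightLifting_iff_bijective {B : Type*} [Bicategory B] {a b c : B}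
    (f : b ⟶ a) (g : c ⟶ a) (ℓ : c ⟶ b) (lam : ℓ ≫ f ⟶ g) :
    IsAbsoluteRightLifting f g ℓ lam ↔ ∀ (x : B) (p : x ⟶ b) (q : x ⟶ c),
      Function.Bijective fun ζ : p ⟶ q ≫ ℓ => ζ ▷ f ≫ (α_ q ℓ f).hom ≫ q ◁ lam := by
  simp only [Function.bijective_iff_existsUnique, IsAbsoluteRightLifting, eq_comm]

namespace CategoryTheory.Bicategory

theorem whiskerRight_whiskerRight_congr {B : Type*} [Bicategory B] [Bicategory.Strict B]
    {w x y y' z : B} {p p' : w ⟶ x} (ζ : p ⟶ p')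
    {g : x ⟶ y} {h : y ⟶ z} {g' : x ⟶ y'} {h' : y' ⟶ z} (e : g ≫ h = g' ≫ h') :
    ζ ▷ g ▷ h = eqToHom (by simp only [Category.assoc, e]) ≫ ζ ▷ g' ▷ h' ≫
      eqToHom (by simp only [Category.assoc, e]) := by
  have hcongr := whiskerRight_congr e ζ
  simp only [whiskerRight_comp, Strict.associator_eqToIso, eqToIso.hom, eqToIso.inv] at hcongr
  rw [eqToHom_comp_iff, comp_eqToHom_iff] at hcongr
  simp [hcongr]

namespace Adjunction

theorem homEquiv₂_symm_comp_whiskerRight {B : Type*} [Bicategory B] {a b c : B}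
    {l : b ⟶ c} {r : c ⟶ b} (adj : l ⊣ r) {g : a ⟶ b} {h h' : a ⟶ c}
    (γ : g ⟶ h ≫ r) (k : h ⟶ h') :
    adj.homEquiv₂.symm (γ ≫ k ▷ r) = adj.homEquiv₂.symm γ ≫ k := by
  simp only [homEquiv₂_symm_apply]
  calc (γ ≫ k ▷ r) ▷ l ≫ (α_ h' r l).hom ≫ h' ◁ adj.counit ≫ (ρ_ h').hom
      = 𝟙 _ ⊗≫ γ ▷ l ⊗≫ (k ▷ (r ≫ l) ≫ h' ◁ adj.counit) ⊗≫ 𝟙 _ := by bicategory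
    _ = 𝟙 _ ⊗≫ γ ▷ l ⊗≫ (h ◁ adj.counit ≫ k ▷ 𝟙 c) ⊗≫ 𝟙 _ := by rw [← whisker_exchange]
    _ = _ := by bicategory

theorem homEquiv₂_symm_whiskerRight {B : Type*} [Bicategory B] [Bicategory.Strict B]
    {a a' b b' : B} {f : b ⟶ a} {u : a ⟶ b} {f' : b' ⟶ a'} {u' : a' ⟶ b'}
    (adj : f ⊣ u) (adj' : f' ⊣ u') {Δa : a ⟶ a'} {Δb : b ⟶ b'}
    (hf : f ≫ Δa = Δb ≫ f') (hu : u ≫ Δb = Δa ≫ u')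
    (hcounit : eqToHom (show (u ≫ f) ≫ Δa = Δa ≫ u' ≫ f' by
          rw [Category.assoc, hf, ← Category.assoc, hu, Category.assoc]) ≫ Δa ◁ adj'.counit =
      adj.counit ▷ Δa ≫ eqToHom (show 𝟙 a ≫ Δa = Δa ≫ 𝟙 a' by
          rw [Category.id_comp, Category.comp_id]))
    {x : B} {p : x ⟶ b} {t : x ⟶ a} (ζ : p ⟶ t ≫ u) :
    eqToHom (show (p ≫ f) ≫ Δa = (p ≫ Δb) ≫ f' by rw [Category.assoc, hf, ← Category.assoc]) ≫
      adj'.homEquiv₂.symm (ζ ▷ Δb ≫ eqToHom (show (t ≫ u) ≫ Δb = (t ≫ Δa) ≫ u' by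
        rw [Category.assoc, hu, ← Category.assoc])) =
    adj.homEquiv₂.symm ζ ▷ Δa := by
  have hcounit' := (eqToHom_comp_iff _ _ _).mp hcounit
  simp only [homEquiv₂_symm_apply, Strict.associator_eqToIso, Strict.rightUnitor_eqToIso,
    eqToIso.hom, eqToIso.inv, comp_whiskerRight, Bicategory.comp_whiskerLeft,
    Bicategory.whiskerLeft_comp, eqToHom_whiskerRight, whiskerLeft_eqToHom, hcounit',
    Category.assoc, eqToHom_trans, eqToHom_trans_assoc, whiskerRight_whiskerRight_congr ζ hf.symm,
    whisker_assoc, eqToHom_refl, Category.id_comp]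

end Adjunction

end CategoryTheory.Bicategory

/-- Right adjoints preserve limits, 2-categorically: in a strict 2-category, given
adjunctions `f ⊣ u` and `f' ⊣ u'`, 1-cells `Δa : a ⟶ a'` and `Δb : b ⟶ b'` commuting
strictly with the left and with the right adjoints, whose units and counits are
compatible, if `(r, lam)` is an absolute right lifting of `d` through `Δa`, then
`(r ≫ u, lam ▷ u')` is an absolute right lifting of `d ≫ u'` through `Δb`. -/
theorem right_adjoints_preserve_limits
    {B : Type*} [Bicategory B] [Bicategory.Strict B] {a a' b b' : B}
    (f : b ⟶ a) (u : a ⟶ b) (η : 𝟙 b ⟶ f ≫ u) (ϵ : u ≫ f ⟶ 𝟙 a)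
    (hLt : leftZigzag η ϵ = (λ_ f).hom ≫ (ρ_ f).inv)
    (hRt : rightZigzag η ϵ = (ρ_ u).hom ≫ (λ_ u).inv)
    (f' : b' ⟶ a') (u' : a' ⟶ b') (η' : 𝟙 b' ⟶ f' ≫ u') (ϵ' : u' ≫ f' ⟶ 𝟙 a')
    (hLt' : leftZigzag η' ϵ' = (λ_ f').hom ≫ (ρ_ f').inv)
    (hRt' : rightZigzag η' ϵ' = (ρ_ u').hom ≫ (λ_ u').inv)
    (Δa : a ⟶ a') (Δb : b ⟶ b')
    (hf : f ≫ Δa = Δb ≫ f') (hu : u ≫ Δb = Δa ≫ u')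
    (hcounit : eqToHom (show (u ≫ f) ≫ Δa = Δa ≫ u' ≫ f' by
          rw [Category.assoc, hf, ← Category.assoc, hu, Category.assoc]) ≫ Δa ◁ ϵ' =
      ϵ ▷ Δa ≫ eqToHom (show 𝟙 a ≫ Δa = Δa ≫ 𝟙 a' by
          rw [Category.id_comp, Category.comp_id]))
    (x : B) (d : x ⟶ a') (r : x ⟶ a) (lam : r ≫ Δa ⟶ d)
    (hlift : IsAbsoluteRightLifting Δa d r lam) :
    IsAbsoluteRightLifting Δb (d ≫ u') (r ≫ u)
      (eqToHom (show (r ≫ u) ≫ Δb = (r ≫ Δa) ≫ u' by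
          rw [Category.assoc, hu, ← Category.assoc]) ≫ lam ▷ u') := by
  let adj : f ⊣ u := ⟨η, ϵ, hLt, hRt⟩
  let adj' : f' ⊣ u' := ⟨η', ϵ', hLt', hRt'⟩
  rw [isAbsoluteRightLifting_iff_bijective] at hlift ⊢
  intro y p q
  let e : (p ⟶ q ≫ r ≫ u) ≃ (p ≫ f ⟶ q ≫ r) :=
    (Iso.homCongr (Iso.refl p) (α_ q r u).symm).trans adj.homEquiv₂.symm
  let e' : ((p ≫ f) ≫ Δa ⟶ q ≫ d) ≃ (p ≫ Δb ⟶ q ≫ d ≫ u') :=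
    (Iso.homCongr (eqToIso (by rw [Category.assoc, hf, ← Category.assoc])) (Iso.refl _)).trans
      (adj'.homEquiv₂.trans (Iso.homCongr (Iso.refl (p ≫ Δb)) (α_ q d u')))
  convert e'.bijective.comp ((hlift y (p ≫ f) q).comp e.bijective) using 1
  funext ζ
  refine e'.symm_apply_eq.mp ?_
  simp only [e, e', Equiv.symm_trans_apply, Equiv.trans_apply, Iso.homCongr_symm,
    Iso.homCongr_apply, Iso.refl_symm, Iso.refl_hom, Iso.refl_inv, Iso.symm_hom, Iso.symm_inv,
    Category.id_comp, Category.comp_id, eqToIso.hom, Function.comp_apply]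
  have hlam : (ζ ▷ Δb ≫ (α_ q (r ≫ u) Δb).hom ≫
        q ◁ (eqToHom (by simp only [Category.assoc, hu]) ≫ lam ▷ u')) ≫ (α_ q d u').inv =
      ((ζ ≫ (α_ q r u).inv) ▷ Δb ≫ eqToHom (by simp only [Category.assoc, hu])) ≫
        ((α_ q r Δa).hom ≫ q ◁ lam) ▷ u' := by
    simp [Strict.associator_eqToIso]
  rw [hlam, Adjunction.homEquiv₂_symm_comp_whiskerRight, ← Category.assoc,
    Adjunction.homEquiv₂_symm_whiskerRight adj adj' hf hu hcounit]
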